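/- Let n ≥ 2 and, for j = 1, 2, let A_j be the n×n complex matrix a_j I_n + E_{1,n} (equal to a_j on the diagonal, 1 in the entry in row 1 and column n, and 0 elsewhere), where a_1 = a e^{iθ} with a > 1 real and θ an irrational multiple of π, and a_2 = −1. Then: (i) the set {z ∈ ℂ^n : J_{(A_1,A_2)}(z) = ℂ^n} equals {(z_1, 0, …, 0)ᵗ : z_1 ∈ ℂ}; in particular the pair (A_1, A_2) is locally hypercyclic; and (ii) the pair (A_1, A_2) is not hypercyclic, i.e. no vector w ∈ ℂ^n has {A_1^k A_2^l w : k, l ∈ ℕ∪{0}} dense in ℂ^n. -/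

import Mathlib

open Filter Topology

/-- The extended limit set `J_{(A,B)}(z)` of a pair of `n × n` complex matrices acting on
`ℂⁿ`. -/
def JSetPair {n : ℕ} (A B : Matrix (Fin n) (Fin n) ℂ) (z : Fin n → ℂ) :
    Set (Fin n → ℂ) :=
  {w | ∃ (u : ℕ → Fin n → ℂ) (k l : ℕ → ℕ),
    Tendsto u atTop (𝓝 z) ∧
    Tendsto (fun m => k m + l m) atTop atTop ∧
    Tendsto (fun m => (A ^ k m * B ^ l m).mulVec (u m)) atTop (𝓝 w)}

namespace JProof

open Matrix Complex

variable {n : ℕ}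

noncomputable def Complex.abs : AbsoluteValue ℂ ℝ :=
  IsAbsoluteValue.toAbsoluteValue (norm : ℂ → ℝ)

lemma Complex.norm_eq_abs (z : ℂ) : ‖z‖ = Complex.abs z := rfl

lemma Complex.abs_ofReal (r : ℝ) : Complex.abs (r : ℂ) = |r| := by
  show ‖(r : ℂ)‖ = |r|
  simp

@[simp] lemma Complex.abs_natCast (k : ℕ) : Complex.abs (k : ℂ) = k := by
  show ‖(k : ℂ)‖ = k
  simp

@[simp] lemma Complex.abs_ofNat (m : ℕ) [m.AtLeastTwo] :
    Complex.abs (ofNat(m) : ℂ) = ofNat(m) := by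
  show ‖(ofNat(m) : ℂ)‖ = ofNat(m)
  simp

lemma Complex.abs_exp (z : ℂ) : Complex.abs (Complex.exp z) = Real.exp z.re := by
  show ‖Complex.exp z‖ = Real.exp z.re
  exact _root_.Complex.norm_exp z

lemma Complex.abs_mul_exp_arg_mul_I (x : ℂ) :
    ((Complex.abs x : ℝ) : ℂ) * Complex.exp (Complex.arg x * Complex.I) = x :=
  _root_.Complex.norm_mul_exp_arg_mul_I x

lemma mul_aux (i0 iN : Fin n) (h : iN ≠ i0) (x p y q : ℂ) :
    (x • (1 : Matrix (Fin n) (Fin n) ℂ) + p • Matrix.single i0 iN (1:ℂ)) *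
      (y • 1 + q • Matrix.single i0 iN (1:ℂ)) =
    (x*y) • 1 + (x*q + p*y) • Matrix.single i0 iN (1:ℂ) := by
  have hE : Matrix.single i0 iN (1:ℂ) * Matrix.single i0 iN (1:ℂ) = 0 :=
    Matrix.single_mul_single_of_ne (c := (1:ℂ)) i0 iN i0 h 1
  simp only [add_mul, mul_add, smul_mul_assoc, mul_smul_comm, smul_smul, hE, smul_zero,
    one_mul, mul_one, add_zero]
  module

lemma pow_aux (i0 iN : Fin n) (h : iN ≠ i0) (c : ℂ) (k : ℕ) :
    (c • (1 : Matrix (Fin n) (Fin n) ℂ) + Matrix.single i0 iN (1:ℂ))^k =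
    c^k • 1 + ((k : ℂ) * c^(k-1)) • Matrix.single i0 iN (1:ℂ) := by
  induction k with
  | zero => simp
  | succ k ih =>
    rw [pow_succ, ih]
    have h1 : (c • (1 : Matrix (Fin n) (Fin n) ℂ) + Matrix.single i0 iN (1:ℂ))
        = c • 1 + (1:ℂ) • Matrix.single i0 iN (1:ℂ) := by rw [one_smul]
    rw [h1, mul_aux i0 iN h]
    have hc : c ^ k * c = c ^ (k+1) := (pow_succ c k).symm
    have hd : c ^ k * 1 + (k:ℂ) * c^(k-1) * c = (((k+1 : ℕ)) : ℂ) * c^((k+1)-1) := by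
      cases k with
      | zero => norm_num
      | succ k =>
        simp only [Nat.add_sub_cancel]
        push_cast
        ring
    rw [hc, hd]

lemma mulVec_aux (i0 iN : Fin n) (x y : ℂ) (u : Fin n → ℂ) :
    (x • (1 : Matrix (Fin n) (Fin n) ℂ) + y • Matrix.single i0 iN (1:ℂ)).mulVec u =
    fun i => x * u i + if i = i0 then y * u iN else 0 := by
  funext i
  simp only [Matrix.add_mulVec, Matrix.smul_mulVec, Matrix.one_mulVec, Pi.add_apply,
    Pi.smul_apply, smul_eq_mul]
  congr 1
  by_cases hi : i = i0
  · subst hi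
    simp [Matrix.mulVec, dotProduct, Matrix.single, ite_and]
  · simp [Matrix.mulVec, dotProduct, Matrix.single, ite_and, hi,
      Ne.symm hi]


noncomputable def AA (a θ : ℝ) : ℂ := (a : ℂ) * Complex.exp (θ * Complex.I)
noncomputable def Cc (α : ℂ) (k l : ℕ) : ℂ := α^k * (-1)^l
noncomputable def Dd (α : ℂ) (k l : ℕ) : ℂ :=
  α^k * ((l:ℂ) * (-1)^(l-1)) + ((k:ℂ) * α^(k-1)) * (-1)^l
noncomputable def rr (α : ℂ) (k l : ℕ) : ℂ := (k:ℂ)/α - l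



lemma mulVec_prod (i0 iN : Fin n) (h : iN ≠ i0) (α : ℂ) (k l : ℕ) (u : Fin n → ℂ) :
    ((α • (1 : Matrix (Fin n) (Fin n) ℂ) + Matrix.single i0 iN (1:ℂ))^k *
      ((-1 : ℂ) • 1 + Matrix.single i0 iN (1:ℂ))^l).mulVec u =
    fun i => Cc α k l * u i + if i = i0 then Dd α k l * u iN else 0 := by
  rw [pow_aux i0 iN h, pow_aux i0 iN h, mul_aux i0 iN h, mulVec_aux]
  rfl

variable {a θ : ℝ}

lemma abs_AA (ha0 : 0 < a) : Complex.abs (AA a θ) = a := by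
  rw [AA, _root_.map_mul, Complex.abs_ofReal, abs_of_pos ha0]
  simp [Complex.abs_exp]

lemma AA_ne (ha0 : 0 < a) : AA a θ ≠ 0 := by
  intro h
  have := abs_AA (θ := θ) ha0
  rw [h] at this
  simp at this
  linarith

lemma abs_Cc (ha0 : 0 < a) (k l : ℕ) : Complex.abs (Cc (AA a θ) k l) = a ^ k := by
  rw [Cc, _root_.map_mul, map_pow, map_pow, abs_AA ha0]
  simp

lemma Cc_ne (ha0 : 0 < a) (k l : ℕ) : Cc (AA a θ) k l ≠ 0 := by
  intro h
  have := abs_Cc (θ := θ) ha0 k l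
  rw [h] at this
  simp at this
  exact absurd this.symm (by positivity)

lemma Dd_eq {α : ℂ} (hα : α ≠ 0) (k l : ℕ) (hl : 1 ≤ l) :
    Dd α k l = Cc α k l * rr α k l := by
  rw [Dd, Cc, rr]
  cases l with
  | zero => omega
  | succ l =>
    simp only [Nat.add_sub_cancel]
    cases k with
    | zero =>
      simp only [pow_zero, Nat.cast_zero, zero_mul, zero_div, zero_sub, pow_succ]
      push_cast
      ring
    | succ k =>
      simp only [Nat.add_sub_cancel, pow_succ]
      field_simp
      push_cast
      ring

lemma im_AA (ha0 : 0 < a) : (AA a θ).im = a * Real.sin θ := by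
  rw [AA]
  simp [Complex.exp_ofReal_mul_I_re, Complex.exp_ofReal_mul_I_im]

lemma rr_ne (ha0 : 0 < a) (hsin : Real.sin θ ≠ 0) (k l : ℕ) (hl : 1 ≤ l) :
    rr (AA a θ) k l ≠ 0 := by
  intro h
  rw [rr, sub_eq_zero, div_eq_iff (AA_ne ha0)] at h
  have him := congrArg Complex.im h
  simp only [Complex.natCast_im, Complex.mul_im, Complex.natCast_re, Complex.natCast_im,
    im_AA ha0] at him
  have hl0 : (l : ℝ) ≠ 0 := Nat.cast_ne_zero.2 (by omega)
  have : (l:ℝ) * (a * Real.sin θ) = 0 := by nlinarith [him]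
  rcases mul_eq_zero.1 this with h1 | h2
  · exact hl0 h1
  · rcases mul_eq_zero.1 h2 with h3 | h4
    · linarith
    · exact hsin h4

lemma Dd_ne (ha0 : 0 < a) (hsin : Real.sin θ ≠ 0) (k l : ℕ) (hl : 1 ≤ l) :
    Dd (AA a θ) k l ≠ 0 := by
  rw [Dd_eq (AA_ne ha0) k l hl]
  exact mul_ne_zero (Cc_ne ha0 k l) (rr_ne ha0 hsin k l hl)

lemma tendsto_invCc (ha : 1 < a) {k : ℕ → ℕ} (hk : Tendsto k atTop atTop) (l : ℕ → ℕ) :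
    Tendsto (fun m => (Cc (AA a θ) (k m) (l m))⁻¹) atTop (𝓝 0) := by
  have ha0 : 0 < a := lt_trans one_pos ha
  apply squeeze_zero_norm (a := fun m => (a⁻¹) ^ (k m))
  · intro m
    rw [norm_inv, Complex.norm_eq_abs, abs_Cc ha0, inv_pow]
  · have h1 : Tendsto (fun K : ℕ => (a⁻¹) ^ K) atTop (𝓝 0) :=
      tendsto_pow_atTop_nhds_zero_of_lt_one (by positivity) (inv_lt_one_of_one_lt₀ ha)
    exact h1.comp hk

lemma abs_rr_lower (ha : 1 < a) (k l : ℕ) :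
    (l : ℝ) - k ≤ Complex.abs (rr (AA a θ) k l) := by
  have ha0 : 0 < a := lt_trans one_pos ha
  rw [rr]
  have h1 : Complex.abs ((l:ℂ)) - Complex.abs ((k:ℂ)/AA a θ)
      ≤ Complex.abs ((k:ℂ)/(AA a θ) - l) := by
    have := norm_sub_norm_le ((l:ℂ)) ((k:ℂ)/(AA a θ))
    rw [norm_sub_rev] at this
    simpa [Complex.norm_eq_abs] using this
  have h2 : Complex.abs ((k:ℂ)/AA a θ) = k / a := by
    rw [map_div₀, abs_AA ha0]
    simp
  have h3 : (k : ℝ)/a ≤ k := by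
    rw [div_le_iff₀ ha0]
    nlinarith [Nat.cast_nonneg (α := ℝ) k]
  have h4 : Complex.abs ((l:ℂ)) = l := by simp
  linarith

lemma exists_int_combo (β : ℝ) (hβ : Irrational β) (ε : ℝ) (hε : 0 < ε) :
    ∃ (m j : ℤ), 0 < m ∧ 0 < |(m : ℝ) * β + j| ∧ |(m : ℝ) * β + j| < ε := by
  set S : AddSubgroup ℝ := AddSubgroup.closure {β, 1} with hS
  have hd : Dense (S : Set ℝ) := by
    rcases S.dense_or_cyclic with h | ⟨g, hg⟩
    · exact h
    · exfalso
      have hβS : β ∈ S := AddSubgroup.subset_closure (by simp)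
      have h1S : (1 : ℝ) ∈ S := AddSubgroup.subset_closure (by simp)
      rw [hg, AddSubgroup.mem_closure_singleton] at hβS h1S
      obtain ⟨p, hp⟩ := hβS
      obtain ⟨q, hq⟩ := h1S
      have hq0 : q ≠ 0 := by
        rintro rfl
        simp at hq
      have hq' : (q : ℝ) ≠ 0 := Int.cast_ne_zero.2 hq0
      have hqg : (q : ℝ) * g = 1 := by rw [← hq, zsmul_eq_mul]
      have hpg : (p : ℝ) * g = β := by rw [← hp, zsmul_eq_mul]
      have hβq : β * q = p := by
        calc β * q = (p * g) * q := by rw [hpg]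
        _ = p * (q * g) := by ring
        _ = p := by rw [hqg]; ring
      exact hβ ⟨(p : ℚ)/(q : ℚ), by push_cast; rw [div_eq_iff hq']; linarith [hβq]⟩
  have hne : (Set.Ioo (0:ℝ) (min ε 1)).Nonempty := ⟨min ε 1 / 2,
    by constructor
       · positivity
       · exact half_lt_self (lt_min hε one_pos)⟩
  obtain ⟨g, hgS, hg⟩ := hd.exists_mem_open isOpen_Ioo hne
  rw [hS, SetLike.mem_coe, AddSubgroup.mem_closure_pair] at hgS
  obtain ⟨m, j, hmj⟩ := hgS
  have hmj' : (m : ℝ) * β + j = g := by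
    rw [← hmj]; push_cast [zsmul_eq_mul]; ring
  have hm0 : m ≠ 0 := by
    rintro rfl
    simp only [Int.cast_zero, zero_mul, zero_add] at hmj'
    have h1 : (0:ℝ) < j := hmj' ▸ hg.1
    have h2 : (j:ℝ) < 1 := lt_of_lt_of_le (hmj' ▸ hg.2) (min_le_right _ _)
    have : (0:ℤ) < j := by exact_mod_cast h1
    have : (1:ℝ) ≤ j := by exact_mod_cast this
    linarith
  rcases hm0.lt_or_gt with hneg | hpos
  · refine ⟨-m, -j, by omega, ?_, ?_⟩ <;>
    · push_cast
      rw [show -(m:ℝ) * β + -(j:ℝ) = -((m:ℝ)*β + j) by ring, abs_neg, hmj']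
      rw [abs_of_pos hg.1]
      first
      | exact hg.1
      | exact lt_of_lt_of_le hg.2 (min_le_left _ _)
  · refine ⟨m, j, hpos, ?_, ?_⟩ <;>
    · rw [hmj', abs_of_pos hg.1]
      first
      | exact hg.1
      | exact lt_of_lt_of_le hg.2 (min_le_left _ _)

lemma exists_nat_approx (β : ℝ) (hβ : Irrational β) (t ε : ℝ) (hε : 0 < ε) (K : ℕ) :
    ∃ k : ℕ, K ≤ k ∧ ∃ j : ℤ, |(k : ℝ) * β - t - j| < ε := by
  obtain ⟨m, j, hm, hγ0, hγε⟩ := exists_int_combo β hβ ε hε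
  set γ : ℝ := (m : ℝ) * β + j with hγdef
  have hγne : γ ≠ 0 := by
    intro h
    rw [h, abs_zero] at hγ0
    exact lt_irrefl _ hγ0
  obtain ⟨J, hJ⟩ : ∃ J : ℤ, ((K : ℝ) + 1) ≤ (t + J)/γ := by
    rcases hγne.lt_or_gt with hneg | hpos
    · refine ⟨-⌈((K:ℝ)+1) * |γ| + |t| + 1⌉, ?_⟩
      rw [le_div_iff_of_neg hneg]
      have h1 : (((K:ℝ)+1) * |γ| + |t| + 1 : ℝ) ≤ ⌈((K:ℝ)+1) * |γ| + |t| + 1⌉ := Int.le_ceil _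
      have h2 : |γ| = -γ := abs_of_neg hneg
      push_cast
      nlinarith [abs_nonneg t, le_abs_self t, neg_abs_le t]
    · refine ⟨⌈((K:ℝ)+1) * |γ| + |t| + 1⌉, ?_⟩
      rw [le_div_iff₀ hpos]
      have h1 : (((K:ℝ)+1) * |γ| + |t| + 1 : ℝ) ≤ ⌈((K:ℝ)+1) * |γ| + |t| + 1⌉ := Int.le_ceil _
      have h2 : |γ| = γ := abs_of_pos hpos
      push_cast
      nlinarith [abs_nonneg t, le_abs_self t, neg_abs_le t]
  set T : ℝ := t + J with hT
  have hT0 : (0:ℝ) ≤ T/γ := le_trans (by positivity) hJ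
  set p : ℕ := ⌊T/γ⌋₊ with hp
  have hpK : K + 1 ≤ p := Nat.le_floor (by push_cast; exact hJ)
  have hple : (p : ℝ) ≤ T/γ := Nat.floor_le hT0
  have hplt : T/γ < p + 1 := Nat.lt_floor_add_one _
  have hkey : |(p : ℝ) * γ - T| ≤ |γ| := by
    have he : (p:ℝ) * γ - T = γ * ((p:ℝ) - T/γ) := by
      field_simp
    rw [he, abs_mul]
    have : |(p:ℝ) - T/γ| ≤ 1 := by
      rw [abs_le]
      constructor <;> nlinarith
    nlinarith [abs_nonneg γ]
  have hmt : (0:ℤ) < m := hm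
  have hmnat : (1:ℕ) ≤ m.toNat := by omega
  refine ⟨p * m.toNat, ?_, J - (p:ℤ) * j, ?_⟩
  · calc K ≤ K + 1 := Nat.le_succ _
    _ ≤ p := hpK
    _ ≤ p * m.toNat := Nat.le_mul_of_pos_right p (by omega)
  · have hcast : ((p * m.toNat : ℕ) : ℝ) * β - t - ((J - (p:ℤ)*j : ℤ) : ℝ)
        = (p:ℝ) * γ - T := by
      have : ((m.toNat : ℤ) : ℝ) = (m : ℝ) := by
        rw [Int.toNat_of_nonneg hm.le]
      push_cast [hγdef, hT]
      push_cast at this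
      rw [this]
      ring
    rw [hcast]
    exact lt_of_le_of_lt hkey hγε


lemma exp_phase (x : ℝ) (j : ℤ) (l : ℕ) (hpar : Even (l + 1 + j.natAbs)) :
    Complex.exp (((x - j * Real.pi : ℝ) : ℂ) * Complex.I) =
      -Complex.exp ((x : ℂ) * Complex.I) * (-1)^l := by
  have h1 : ((x - j * Real.pi : ℝ) : ℂ) * Complex.I
      = (x : ℂ) * Complex.I - (j : ℂ) * ((Real.pi : ℂ) * Complex.I) := by
    push_cast; ring
  rw [h1, Complex.exp_sub, Complex.exp_int_mul, Complex.exp_pi_mul_I]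
  have hsq : ((-1 : ℂ)^(j : ℤ))⁻¹ = (-1 : ℂ)^(j : ℤ) := by
    rcases Int.even_or_odd j with he | ho
    · rw [he.neg_one_zpow]; norm_num
    · rw [ho.neg_one_zpow]; norm_num
  rw [div_eq_mul_inv, hsq]
  -- goal : exp (x I) * (-1)^j = -exp (x I) * (-1)^l
  have key : (-1 : ℂ)^(j : ℤ) = -(-1 : ℂ)^l := by
    rcases Nat.even_or_odd l with hl | hl
    · -- l even, so l+1 odd, so natAbs j odd, so j odd
      have hj : Odd j := by
        rw [← Int.natAbs_odd]
        rcases Nat.even_or_odd (l + 1 + j.natAbs) with h | h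
        · have h2 : Even (l + 1 + j.natAbs) := h
          rcases Nat.even_or_odd j.natAbs with hA | hA
          · exfalso
            have : Even (l + 1) := by
              rcases Nat.even_add.1 h2 with h3
              exact h3.2 hA
            rw [Nat.even_add_one] at this
            exact this (by simpa using hl)
          · exact hA
        · exact absurd hpar (Nat.not_even_iff_odd.2 h)
      rw [hj.neg_one_zpow, hl.neg_one_pow]
    · have hj : Even j := by
        rw [← Int.natAbs_even]
        rcases Nat.even_or_odd j.natAbs with hA | hA
        · exact hA
        · exfalso
          have hodd : Odd (l + 1 + j.natAbs) := by
            have : Even (l + 1) := by rcases hl with ⟨c, rfl⟩; exact ⟨c + 1, by ring⟩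
            exact this.add_odd hA
          exact (Nat.not_even_iff_odd.2 hodd) hpar
      rw [hj.neg_one_zpow, hl.neg_one_pow]
      norm_num
  rw [key]
  ring

lemma memJ_of_seq (i0 iN : Fin n) (hne : iN ≠ i0) (ha : 1 < a)
    (hsin : Real.sin θ ≠ 0) (z w : Fin n → ℂ)
    (hz : ∀ j : Fin n, j ≠ i0 → z j = 0) (hz0 : z i0 ≠ 0)
    (k l : ℕ → ℕ) (hk : ∀ m, m ≤ k m) (hl : ∀ m, 1 ≤ l m)
    (hCρ : Tendsto (fun m => Cc (AA a θ) (k m) (l m) * (rr (AA a θ) (k m) (l m))⁻¹) atTop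
      (𝓝 (-(w iN) / z i0)))
    (hinvρ : Tendsto (fun m => (rr (AA a θ) (k m) (l m))⁻¹) atTop (𝓝 0)) :
    w ∈ JSetPair
      ((AA a θ) • (1 : Matrix (Fin n) (Fin n) ℂ) + Matrix.single i0 iN (1:ℂ))
      ((-1 : ℂ) • 1 + Matrix.single i0 iN (1:ℂ)) z := by
  have ha0 : 0 < a := lt_trans one_pos ha
  have hC0 : ∀ m, Cc (AA a θ) (k m) (l m) ≠ 0 := fun m => Cc_ne ha0 _ _
  have hρ0 : ∀ m, rr (AA a θ) (k m) (l m) ≠ 0 := fun m => rr_ne ha0 hsin _ _ (hl m)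
  have hD0 : ∀ m, Dd (AA a θ) (k m) (l m) ≠ 0 := fun m => Dd_ne ha0 hsin _ _ (hl m)
  have hktop : Tendsto k atTop atTop := tendsto_atTop_mono hk tendsto_id
  have hCinv := tendsto_invCc (θ := θ) ha hktop l
  have hDinv : Tendsto (fun m => (Dd (AA a θ) (k m) (l m))⁻¹) atTop (𝓝 0) := by
    have h1 : Tendsto (fun m => (Cc (AA a θ) (k m) (l m))⁻¹ *
        (rr (AA a θ) (k m) (l m))⁻¹) atTop (𝓝 (0 * 0)) := hCinv.mul hinvρ
    rw [mul_zero] at h1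
    exact h1.congr (fun m => by rw [← mul_inv, ← Dd_eq (AA_ne ha0) _ _ (hl m)])
  set u : ℕ → Fin n → ℂ := fun m j =>
    if j = i0 then z i0
    else if j = iN then (w i0 - Cc (AA a θ) (k m) (l m) * z i0) * (Dd (AA a θ) (k m) (l m))⁻¹
    else w j * (Cc (AA a θ) (k m) (l m))⁻¹ with hu
  refine ⟨u, k, l, ?_, ?_, ?_⟩
  · rw [tendsto_pi_nhds]
    intro j
    by_cases hj : j = i0
    · subst hj
      simp only [hu, if_pos rfl]
      exact tendsto_const_nhds
    · by_cases hjN : j = iN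
      · subst hjN
        simp only [hu, if_neg hj, if_pos rfl, ite_true, hz j hj]
        have h2 : Tendsto (fun m => w i0 * (Dd (AA a θ) (k m) (l m))⁻¹ -
            z i0 * (rr (AA a θ) (k m) (l m))⁻¹) atTop (𝓝 (w i0 * 0 - z i0 * 0)) :=
          (hDinv.const_mul (w i0)).sub (hinvρ.const_mul (z i0))
        rw [mul_zero, mul_zero, sub_zero] at h2
        refine h2.congr (fun m => ?_)
        rw [Dd_eq (AA_ne ha0) _ _ (hl m)]
        field_simp [hC0 m, hρ0 m]
      · simp only [hu, if_neg hj, if_neg hjN, hz j hj]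
        simpa using hCinv.const_mul (w j)
  · exact tendsto_atTop_mono (fun m => le_trans (hk m) (Nat.le_add_right _ _)) tendsto_id
  · rw [tendsto_pi_nhds]
    intro i
    have heq : ∀ m : ℕ, ((AA a θ • (1 : Matrix (Fin n) (Fin n) ℂ) +
        Matrix.single i0 iN (1:ℂ))^(k m) *
        ((-1:ℂ) • 1 + Matrix.single i0 iN (1:ℂ))^(l m)).mulVec (u m) =
        fun i => Cc (AA a θ) (k m) (l m) * u m i +
          if i = i0 then Dd (AA a θ) (k m) (l m) * u m iN else 0 :=
      fun m => mulVec_prod i0 iN hne (AA a θ) (k m) (l m) (u m)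
    refine Tendsto.congr (fun m => (congrFun (heq m) i).symm) ?_
    have huiN : ∀ m, u m iN = (w i0 - Cc (AA a θ) (k m) (l m) * z i0) *
        (Dd (AA a θ) (k m) (l m))⁻¹ := fun m => by
      simp [hu, if_neg hne]
    have hui0 : ∀ m, u m i0 = z i0 := fun m => by
      simp [hu]
    by_cases hi : i = i0
    · rw [hi]
      simp only [if_pos rfl, ite_true]
      refine tendsto_const_nhds.congr (fun m => ?_)
      rw [huiN m, hui0 m]
      field_simp [hD0 m]
      ring
    · by_cases hiN : i = iN
      · simp only [if_neg hi]
        have hval : w i0 * 0 - z i0 * (-(w iN) / z i0) = w iN := by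
          field_simp
          simp
        have h3 : Tendsto (fun m => w i0 * (rr (AA a θ) (k m) (l m))⁻¹ -
            z i0 * (Cc (AA a θ) (k m) (l m) * (rr (AA a θ) (k m) (l m))⁻¹)) atTop
            (𝓝 (w i0 * 0 - z i0 * (-(w iN) / z i0))) :=
          (hinvρ.const_mul (w i0)).sub (hCρ.const_mul (z i0))
        rw [hval] at h3
        rw [hiN]
        refine h3.congr (fun m => ?_)
        rw [huiN m, Dd_eq (AA_ne ha0) _ _ (hl m)]
        field_simp [hC0 m, hρ0 m]
        ring
      · simp only [if_neg hi]
        refine tendsto_const_nhds.congr (fun m => ?_)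
        simp only [hu]
        rw [if_neg hi, if_neg hiN]
        field_simp [hC0 m]
        simp


lemma caseC (i0 iN : Fin n) (hne : iN ≠ i0) (ha : 1 < a)
    (hθ : Irrational (θ / Real.pi)) (hsin : Real.sin θ ≠ 0) (z w : Fin n → ℂ)
    (hz : ∀ j : Fin n, j ≠ i0 → z j = 0) (hz0 : z i0 ≠ 0) (hwN : w iN ≠ 0) :
    w ∈ JSetPair
      ((AA a θ) • (1 : Matrix (Fin n) (Fin n) ℂ) + Matrix.single i0 iN (1:ℂ))
      ((-1 : ℂ) • 1 + Matrix.single i0 iN (1:ℂ)) z := by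
  have ha0 : 0 < a := lt_trans one_pos ha
  set τ : ℂ := -(w iN) / z i0 with hτdef
  have hτ : τ ≠ 0 := div_ne_zero (neg_ne_zero.2 hwN) hz0
  have habsτ : 0 < Complex.abs τ := AbsoluteValue.pos _ hτ
  have hπ : (0:ℝ) < Real.pi := Real.pi_pos
  choose k hkm j hj using fun m : ℕ => exists_nat_approx (θ/Real.pi) hθ
    ((Complex.arg τ)/Real.pi) (1/(((m:ℝ)+1)*Real.pi)) (by positivity) m
  set φ : ℕ → ℝ := fun m => (k m) * θ - Complex.arg τ - (j m) * Real.pi with hφdef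
  have hφb : ∀ m, |φ m| ≤ 1/((m:ℝ)+1) := by
    intro m
    have h1 := hj m
    have h2 : (k m) * (θ/Real.pi) - (Complex.arg τ)/Real.pi - (j m) = φ m / Real.pi := by
      rw [hφdef]; field_simp
    rw [h2, abs_div, abs_of_pos hπ, div_lt_iff₀ hπ] at h1
    have h3 : 1/(((m:ℝ)+1)*Real.pi)*Real.pi = 1/((m:ℝ)+1) := by field_simp
    rw [h3] at h1
    exact h1.le
  have hφ0 : Tendsto φ atTop (𝓝 0) := by
    apply squeeze_zero_norm (a := fun m : ℕ => 1/((m:ℝ)+1))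
    · exact fun m => hφb m
    · exact tendsto_one_div_add_atTop_nhds_zero_nat
  set r : ℕ → ℝ := fun m => a^(k m) / Complex.abs τ with hrdef
  have hr0 : ∀ m, 0 < r m := fun m => by positivity
  set B : ℕ → ℕ := fun m => ⌈r m⌉₊ + 1 with hBdef
  set l : ℕ → ℕ := fun m => if Even (B m + 1 + (j m).natAbs) then B m else B m + 1 with hldef
  have hpar : ∀ m, Even (l m + 1 + (j m).natAbs) := by
    intro m
    by_cases h : Even (B m + 1 + (j m).natAbs)
    · simp only [hldef, if_pos h]; exact h
    · simp only [hldef, if_neg h]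
      have he : B m + 1 + 1 + (j m).natAbs = (B m + 1 + (j m).natAbs) + 1 := by omega
      rw [he]
      exact Nat.even_add_one.2 h
  have hlB : ∀ m, B m ≤ l m ∧ l m ≤ B m + 1 := by
    intro m
    simp only [hldef]
    split <;> omega
  have hl_lb : ∀ m, r m + 1 ≤ (l m : ℝ) := by
    intro m
    have h1 : r m ≤ (⌈r m⌉₊ : ℝ) := Nat.le_ceil _
    have h2 : (B m : ℝ) ≤ (l m : ℝ) := Nat.cast_le.2 (hlB m).1
    have h3 : (B m : ℝ) = (⌈r m⌉₊ : ℝ) + 1 := by rw [hBdef]; push_cast; ring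
    linarith
  have hl_ub : ∀ m, (l m : ℝ) ≤ r m + 3 := by
    intro m
    have h1 : (⌈r m⌉₊ : ℝ) < r m + 1 := Nat.ceil_lt_add_one (hr0 m).le
    have h2 : (l m : ℝ) ≤ (B m : ℝ) + 1 := by exact_mod_cast Nat.cast_le.2 (hlB m).2
    have h3 : (B m : ℝ) = (⌈r m⌉₊ : ℝ) + 1 := by rw [hBdef]; push_cast; ring
    linarith
  have hl1 : ∀ m, 1 ≤ l m := fun m => le_trans (by simp only [hBdef]; omega : 1 ≤ B m) (hlB m).1
  have hlpos : ∀ m, (0:ℝ) < (l m : ℝ) := fun m => lt_of_lt_of_le (by positivity) (hl_lb m)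
  have hlne : ∀ m, ((l m : ℕ) : ℂ) ≠ 0 := fun m => Nat.cast_ne_zero.2 (by have := hl1 m; omega)
  have hktop : Tendsto k atTop atTop := tendsto_atTop_mono hkm tendsto_id
  have hrtop : Tendsto r atTop atTop := by
    have h1 : Tendsto (fun m => a^(k m)) atTop atTop :=
      (tendsto_pow_atTop_atTop_of_one_lt ha).comp hktop
    exact Tendsto.atTop_div_const habsτ h1
  have hltop : Tendsto (fun m => (l m : ℝ)) atTop atTop :=
    tendsto_atTop_mono hl_lb (tendsto_atTop_add_const_right atTop 1 hrtop)
  have hak : ∀ m, a^(k m) = r m * Complex.abs τ := fun m => by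
    rw [hrdef]; field_simp
  -- X : a^k / l → |τ|
  have hXub : ∀ m, a^(k m)/(l m : ℝ) ≤ Complex.abs τ := by
    intro m
    rw [div_le_iff₀ (hlpos m), hak m]
    nlinarith [hl_lb m, habsτ, hr0 m]
  have hXdiff : ∀ m, Complex.abs τ - a^(k m)/(l m : ℝ) ≤ 3 * Complex.abs τ / (r m + 1) := by
    intro m
    have e1 : Complex.abs τ - a^(k m)/(l m : ℝ)
        = (Complex.abs τ * (l m : ℝ) - a^(k m))/(l m : ℝ) := by
      rw [sub_div, mul_div_assoc, div_self (hlpos m).ne', mul_one]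
    rw [e1, div_le_div_iff₀ (hlpos m) (by positivity : (0:ℝ) < r m + 1), hak m]
    nlinarith [hl_lb m, hl_ub m, habsτ, hr0 m,
      mul_le_mul_of_nonneg_left (hl_lb m) habsτ.le,
      mul_le_mul_of_nonneg_left (hl_ub m) habsτ.le]
  have hX : Tendsto (fun m => a^(k m)/(l m : ℝ)) atTop (𝓝 (Complex.abs τ)) := by
    have h1 : Tendsto (fun m => Complex.abs τ - a^(k m)/(l m : ℝ)) atTop (𝓝 0) := by
      apply squeeze_zero (fun m => by linarith [hXub m]) hXdiff
      exact Tendsto.div_atTop tendsto_const_nhds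
        (tendsto_atTop_add_const_right atTop 1 hrtop)
    have h2 : Tendsto (fun m : ℕ => Complex.abs τ - (Complex.abs τ - a^(k m)/(l m : ℝ)))
        atTop (𝓝 (Complex.abs τ - 0)) := tendsto_const_nhds.sub h1
    rw [sub_zero] at h2
    exact h2.congr (fun m => by ring)
  -- k/l → 0
  have hkl0 : Tendsto (fun m => (k m : ℝ)/(l m : ℝ)) atTop (𝓝 0) := by
    apply squeeze_zero (fun m => by positivity)
      (g := fun m => (k m : ℝ) * (a⁻¹)^(k m) * Complex.abs τ)
    · intro m
      have h1 : (k m : ℝ)/(l m : ℝ) ≤ (k m : ℝ)/(r m) :=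
        div_le_div_of_nonneg_left (by positivity) (hr0 m) (by linarith [hl_lb m])
      have h2 : (k m : ℝ)/(r m) = (k m : ℝ) * (a⁻¹)^(k m) * Complex.abs τ := by
        rw [hrdef]
        rw [inv_pow]
        field_simp
      linarith
    · have hbase : Tendsto (fun K : ℕ => (K:ℝ) * (a⁻¹)^K * Complex.abs τ) atTop
          (𝓝 (0 * Complex.abs τ)) :=
        (tendsto_self_mul_const_pow_of_lt_one (by positivity)
          (inv_lt_one_of_one_lt₀ ha)).mul_const _
      rw [zero_mul] at hbase
      exact hbase.comp hktop
  -- the complex factor k/(α l) → 0 and Z → 1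
  have hZfac : Tendsto (fun m => (k m : ℂ)/((AA a θ) * (l m : ℕ))) atTop (𝓝 0) := by
    apply squeeze_zero_norm (a := fun m => (k m : ℝ)/(l m : ℝ))
    · intro m
      rw [Complex.norm_eq_abs, map_div₀, _root_.map_mul, abs_AA ha0, Complex.abs_natCast,
        Complex.abs_natCast]
      have h1 : (0:ℝ) ≤ (k m : ℝ) := Nat.cast_nonneg _
      have h2 : (l m : ℝ) ≤ a * (l m : ℝ) := by nlinarith [hlpos m]
      exact div_le_div_of_nonneg_left h1 (hlpos m) h2
    · exact hkl0
  have hfive : Tendsto (fun m => (1:ℂ) - (k m : ℂ)/((AA a θ) * (l m : ℕ))) atTop (𝓝 1) := by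
    have h1 : Tendsto (fun m => (1:ℂ) - (k m : ℂ)/((AA a θ) * (l m : ℕ))) atTop
        (𝓝 ((1:ℂ) - 0)) := tendsto_const_nhds.sub hZfac
    rw [sub_zero] at h1
    exact h1
  have hZ : Tendsto (fun m => ((1:ℂ) - (k m : ℂ)/((AA a θ) * (l m : ℕ)))⁻¹) atTop (𝓝 1) := by
    have h1 := hfive.inv₀ one_ne_zero
    rw [inv_one] at h1
    exact h1
  -- the phase factor
  have hY : Tendsto (fun m => Complex.exp (((φ m + Complex.arg τ : ℝ) : ℂ) * Complex.I))
      atTop (𝓝 (Complex.exp ((Complex.arg τ : ℂ) * Complex.I))) := by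
    have h1 : Tendsto (fun m => φ m + Complex.arg τ) atTop (𝓝 (Complex.arg τ)) := by
      have := hφ0.add_const (Complex.arg τ)
      rw [zero_add] at this
      exact this
    have h2 : Tendsto (fun m => ((φ m + Complex.arg τ : ℝ) : ℂ)) atTop
        (𝓝 ((Complex.arg τ : ℝ) : ℂ)) := (Complex.continuous_ofReal.tendsto _).comp h1
    have h3 := h2.mul_const Complex.I
    exact (Complex.continuous_exp.tendsto _).comp h3
  -- nonvanishing of the factor
  have hrre : ∀ m, rr (AA a θ) (k m) (l m)
      = (-(l m : ℂ)) * ((1:ℂ) - (k m : ℂ)/((AA a θ) * (l m : ℕ))) := by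
    intro m
    rw [rr]
    field_simp [AA_ne ha0, hlne m]
    ring
  have hfacne : ∀ m, ((1:ℂ) - (k m : ℂ)/((AA a θ) * (l m : ℕ))) ≠ 0 := by
    intro m h
    have h1 := rr_ne ha0 hsin (k m) (l m) (hl1 m)
    rw [hrre m, h, mul_zero] at h1
    exact h1 rfl
  -- the key algebraic identity
  have hid : ∀ m, Cc (AA a θ) (k m) (l m) * (rr (AA a θ) (k m) (l m))⁻¹
      = ((a^(k m)/(l m : ℝ) : ℝ) : ℂ) *
        Complex.exp (((φ m + Complex.arg τ : ℝ) : ℂ) * Complex.I) *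
        ((1:ℂ) - (k m : ℂ)/((AA a θ) * (l m : ℕ)))⁻¹ := by
    intro m
    have hphase : (φ m + Complex.arg τ : ℝ) = (k m) * θ - (j m) * Real.pi := by
      rw [hφdef]; ring
    have hexp : Complex.exp (((φ m + Complex.arg τ : ℝ) : ℂ) * Complex.I)
        = -Complex.exp ((((k m) * θ : ℝ) : ℂ) * Complex.I) * (-1)^(l m) := by
      rw [hphase]
      exact exp_phase ((k m) * θ) (j m) (l m) (hpar m)
    have hαK : (AA a θ)^(k m) = ((a:ℝ):ℂ)^(k m) *
        Complex.exp ((((k m) * θ : ℝ) : ℂ) * Complex.I) := by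
      rw [AA, mul_pow, ← Complex.exp_nat_mul]
      congr 1
      push_cast
      ring
    rw [hrre m, mul_inv, hexp]
    have hC : Cc (AA a θ) (k m) (l m) * (-(l m : ℂ))⁻¹
        = ((a^(k m)/(l m : ℝ) : ℝ) : ℂ) *
          (-Complex.exp ((((k m) * θ : ℝ) : ℂ) * Complex.I) * (-1)^(l m)) := by
      rw [Cc, hαK]
      have hcast : ((a^(k m)/(l m : ℝ) : ℝ) : ℂ) = ((a:ℝ):ℂ)^(k m) / ((l m : ℕ) : ℂ) := by
        push_cast
        ring
      rw [hcast]
      field_simp [hlne m]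
    calc Cc (AA a θ) (k m) (l m) * ((-(l m : ℂ))⁻¹ *
          ((1:ℂ) - (k m : ℂ)/((AA a θ) * (l m : ℕ)))⁻¹)
        = (Cc (AA a θ) (k m) (l m) * (-(l m : ℂ))⁻¹) *
          ((1:ℂ) - (k m : ℂ)/((AA a θ) * (l m : ℕ)))⁻¹ := by ring
      _ = _ := by rw [hC]
  -- conclusion
  have hXc : Tendsto (fun m => ((a^(k m)/(l m : ℝ) : ℝ) : ℂ)) atTop
      (𝓝 ((Complex.abs τ : ℝ) : ℂ)) := (Complex.continuous_ofReal.tendsto _).comp hX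
  have hCρ : Tendsto (fun m => Cc (AA a θ) (k m) (l m) * (rr (AA a θ) (k m) (l m))⁻¹)
      atTop (𝓝 τ) := by
    have h1 := (hXc.mul hY).mul hZ
    rw [mul_one, Complex.abs_mul_exp_arg_mul_I] at h1
    exact Tendsto.congr (fun m => (hid m).symm) h1
  have hLinv : Tendsto (fun m => ((l m : ℕ) : ℂ)⁻¹) atTop (𝓝 0) := by
    apply squeeze_zero_norm (a := fun m => ((l m : ℝ))⁻¹)
    · intro m
      rw [norm_inv, Complex.norm_natCast]
    · exact hltop.inv_tendsto_atTop
  have hinvρ : Tendsto (fun m => (rr (AA a θ) (k m) (l m))⁻¹) atTop (𝓝 0) := by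
    have h2 : Tendsto (fun m => (-((l m : ℕ) : ℂ))⁻¹) atTop (𝓝 0) := by
      have h3 := hLinv.neg
      rw [neg_zero] at h3
      exact h3.congr (fun m => by rw [inv_neg])
    have h1 : Tendsto (fun m => (-((l m : ℕ) : ℂ))⁻¹ *
        ((1:ℂ) - (k m : ℂ)/((AA a θ) * (l m : ℕ)))⁻¹) atTop (𝓝 ((0:ℂ) * 1)) := h2.mul hZ
    rw [zero_mul] at h1
    refine Tendsto.congr (fun m => ?_) h1
    rw [hrre m, mul_inv]
  exact memJ_of_seq i0 iN hne ha hsin z w hz hz0 k l hkm hl1 hCρ hinvρ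

lemma memJ (i0 iN : Fin n) (hne : iN ≠ i0) (ha : 1 < a)
    (hθ : Irrational (θ / Real.pi)) (z w : Fin n → ℂ)
    (hz : ∀ j : Fin n, j ≠ i0 → z j = 0) :
    w ∈ JSetPair
      ((AA a θ) • (1 : Matrix (Fin n) (Fin n) ℂ) + Matrix.single i0 iN (1:ℂ))
      ((-1 : ℂ) • 1 + Matrix.single i0 iN (1:ℂ)) z := by
  have ha0 : 0 < a := lt_trans one_pos ha
  have hsin : Real.sin θ ≠ 0 := by
    intro h
    rcases Real.sin_eq_zero_iff.1 h with ⟨q, hq⟩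
    apply hθ.ne_int q
    rw [← hq]
    field_simp
  by_cases hz0 : z i0 = 0
  · -- `z = 0`: take `l = 0`, `k = m` and solve exactly.
    have hzz : ∀ j, z j = 0 := fun j => by
      by_cases hj : j = i0
      · rw [hj]; exact hz0
      · exact hz j hj
    set u : ℕ → Fin n → ℂ := fun m j =>
      if j = i0 then (w i0 - Dd (AA a θ) m 0 * w iN * (Cc (AA a θ) m 0)⁻¹) * (Cc (AA a θ) m 0)⁻¹
      else w j * (Cc (AA a θ) m 0)⁻¹ with hu
    have hC0 : ∀ m : ℕ, Cc (AA a θ) m 0 ≠ 0 := fun m => Cc_ne ha0 m 0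
    have hCinv : Tendsto (fun m : ℕ => (Cc (AA a θ) m 0)⁻¹) atTop (𝓝 0) :=
      tendsto_invCc ha tendsto_id (fun _ => 0)
    refine ⟨u, fun m => m, fun _ => 0, ?_, ?_, ?_⟩
    · rw [tendsto_pi_nhds]
      intro j
      rw [hzz j]
      by_cases hj : j = i0
      · rw [hj]
        have hDCC : Tendsto (fun m : ℕ => Dd (AA a θ) m 0 * (Cc (AA a θ) m 0)⁻¹ *
            (Cc (AA a θ) m 0)⁻¹) atTop (𝓝 0) := by
          apply squeeze_zero_norm (a := fun m : ℕ => ((m+1 : ℕ) : ℝ) * (a⁻¹)^(m+1))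
          · intro m
            have hDval : Dd (AA a θ) m 0 = (m : ℂ) * (AA a θ)^(m-1) := by
              simp [Dd]
            rw [hDval]
            simp only [norm_mul, norm_inv, Complex.norm_eq_abs, abs_Cc ha0, map_pow,
              abs_AA ha0, Complex.abs_natCast]
            cases m with
            | zero => simp; positivity
            | succ mm =>
              simp only [Nat.add_sub_cancel]
              have he : a^mm * ((a^(mm+1))⁻¹ * (a^(mm+1))⁻¹) = (a^(mm+2))⁻¹ * (a^mm * (a^mm)⁻¹) := by
                field_simp
                ring
              have he2 : (a:ℝ)^mm * (a^mm)⁻¹ = 1 := by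
                field_simp
              rw [mul_assoc, mul_assoc, he, he2, mul_one]
              push_cast
              rw [← inv_pow]
              have h4 : ((mm:ℝ)+1) ≤ ((mm:ℝ)+1+1) := by linarith
              have h5 : (0:ℝ) < (a⁻¹)^(mm+2) := by positivity
              calc ((mm:ℝ)+1) * (a⁻¹^(mm+2)) ≤ ((mm:ℝ)+1+1) * (a⁻¹^(mm+2)) := by nlinarith
              _ ≤ ((mm:ℝ)+1+1) * (a⁻¹^(mm+1+1)) := le_refl _
          · exact (tendsto_self_mul_const_pow_of_lt_one (by positivity)
              (inv_lt_one_of_one_lt₀ ha)).comp (tendsto_add_atTop_nat 1)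
        have hfin : Tendsto (fun m : ℕ => w i0 * (Cc (AA a θ) m 0)⁻¹ -
            w iN * (Dd (AA a θ) m 0 * (Cc (AA a θ) m 0)⁻¹ * (Cc (AA a θ) m 0)⁻¹)) atTop
            (𝓝 (w i0 * 0 - w iN * 0)) := (hCinv.const_mul (w i0)).sub (hDCC.const_mul (w iN))
        rw [mul_zero, mul_zero, sub_zero] at hfin
        refine hfin.congr (fun m => ?_)
        simp only [hu, if_true]
        ring
      · simp only [hu, if_neg hj]
        simpa using hCinv.const_mul (w j)
    · simp only [add_zero]
      exact tendsto_id
    · have himg : ∀ m : ℕ, (((AA a θ) • (1 : Matrix (Fin n) (Fin n) ℂ) +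
          Matrix.single i0 iN (1:ℂ))^m *
          ((-1:ℂ) • 1 + Matrix.single i0 iN (1:ℂ))^0).mulVec (u m) = w := by
        intro m
        rw [mulVec_prod i0 iN hne]
        funext i
        by_cases hi : i = i0
        · rw [hi]
          simp only [if_pos rfl, ite_true]
          have h1 : u m i0 = (w i0 - Dd (AA a θ) m 0 * w iN * (Cc (AA a θ) m 0)⁻¹) *
              (Cc (AA a θ) m 0)⁻¹ := by simp [hu]
          have h2 : u m iN = w iN * (Cc (AA a θ) m 0)⁻¹ := by simp [hu, if_neg hne]
          rw [h1, h2]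
          field_simp [hC0 m]
          ring
        · simp only [if_neg hi]
          have h2 : u m i = w i * (Cc (AA a θ) m 0)⁻¹ := by simp [hu, if_neg hi]
          rw [h2]
          field_simp [hC0 m]
          simp
      simp only [himg]
      exact tendsto_const_nhds
  · -- `z i0 ≠ 0`
    by_cases hwN : w iN = 0
    · -- easy subcase: target ratio is 0
      set l : ℕ → ℕ := fun m => (m+1) * (⌈a^(m+1)⌉₊ + m + 2) with hldef
      have hl1 : ∀ m, 1 ≤ l m := fun m =>
        Nat.one_le_iff_ne_zero.2 (Nat.mul_ne_zero (Nat.succ_ne_zero m) (by omega))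
      have hrb : ∀ m : ℕ, ((m:ℝ)+1) * a^(m+1) ≤ Complex.abs (rr (AA a θ) (m+1) (l m)) := by
        intro m
        have h1 := abs_rr_lower (θ := θ) ha (m+1) (l m)
        have h2 : a^(m+1) ≤ (⌈a^(m+1)⌉₊ : ℝ) := Nat.le_ceil _
        have h3 : ((l m : ℕ) : ℝ) = ((m:ℝ)+1) * ((⌈a^(m+1)⌉₊:ℝ) + m + 2) := by
          rw [hldef]; push_cast; ring
        rw [h3] at h1
        push_cast at h1
        nlinarith [mul_nonneg (show (0:ℝ) ≤ (m:ℝ)+1 by positivity) (sub_nonneg.2 h2)]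
      have habspos : ∀ m : ℕ, 0 < Complex.abs (rr (AA a θ) (m+1) (l m)) := fun m =>
        lt_of_lt_of_le (by positivity) (hrb m)
      have hCρ : Tendsto (fun m => Cc (AA a θ) (m+1) (l m) *
          (rr (AA a θ) (m+1) (l m))⁻¹) atTop (𝓝 (-(w iN) / z i0)) := by
        have hval : -(w iN) / z i0 = 0 := by rw [hwN]; simp
        rw [hval]
        apply squeeze_zero_norm (a := fun m : ℕ => 1/((m:ℝ)+1))
        · intro m
          rw [norm_mul, norm_inv]
          simp only [Complex.norm_eq_abs, abs_Cc ha0]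
          rw [← div_eq_mul_inv, div_le_div_iff₀ (habspos m) (by positivity)]
          have := hrb m
          have h5 : (0:ℝ) < a^(m+1) := by positivity
          nlinarith
        · exact tendsto_one_div_add_atTop_nhds_zero_nat
      have hinvρ : Tendsto (fun m => (rr (AA a θ) (m+1) (l m))⁻¹) atTop (𝓝 0) := by
        apply squeeze_zero_norm (a := fun m : ℕ => 1/((m:ℝ)+1))
        · intro m
          rw [norm_inv]
          simp only [Complex.norm_eq_abs]
          rw [← one_div, div_le_div_iff₀ (habspos m) (by positivity)]
          have := hrb m
          have h6 : (1:ℝ) ≤ a^(m+1) := one_le_pow₀ ha.le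
          nlinarith
        · exact tendsto_one_div_add_atTop_nhds_zero_nat
      exact memJ_of_seq i0 iN hne ha hsin z w hz hz0 (fun m => m+1) l
        (fun m => Nat.le_succ m) hl1 hCρ hinvρ
    · exact caseC i0 iN hne ha hθ hsin z w hz hz0 hwN

end JProof

open JProof Matrix

/-- For `n ≥ 2`, let `Aⱼ = aⱼ Iₙ + E₁ₙ` (`j = 1, 2`) be the `n × n` complex matrices with
`aⱼ` on the diagonal, `1` in the `(1,n)` entry and `0` elsewhere, where `a₁ = a e^{iθ}`
with `a > 1` real and `θ` an irrational multiple of `π`, and `a₂ = −1`. Then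
`{z : J_{(A₁,A₂)}(z) = ℂⁿ} = {(z₁,0,…,0)ᵗ}`, so `(A₁,A₂)` is a locally hypercyclic pair;
moreover `(A₁,A₂)` is not hypercyclic. -/
theorem complex_upper_triangular_pair_locally_hypercyclic_not_hypercyclic
    (n : ℕ) (hn : 2 ≤ n) (a θ : ℝ) (ha : 1 < a)
    (hθ : Irrational (θ / Real.pi))
    (A₁ A₂ : Matrix (Fin n) (Fin n) ℂ)
    (hA₁ : A₁ = ((a : ℂ) * Complex.exp (θ * Complex.I)) • (1 : Matrix (Fin n) (Fin n) ℂ) +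
      Matrix.single ⟨0, by omega⟩ ⟨n - 1, by omega⟩ (1 : ℂ))
    (hA₂ : A₂ = (-1 : ℂ) • (1 : Matrix (Fin n) (Fin n) ℂ) +
      Matrix.single ⟨0, by omega⟩ ⟨n - 1, by omega⟩ (1 : ℂ)) :
    ({z : Fin n → ℂ | JSetPair A₁ A₂ z = Set.univ}
        = {z : Fin n → ℂ | ∀ j : Fin n, j ≠ ⟨0, by omega⟩ → z j = 0}) ∧
    (∃ z : Fin n → ℂ, z ≠ 0 ∧ JSetPair A₁ A₂ z = Set.univ) ∧
    ¬ ∃ w : Fin n → ℂ, Dense {v : Fin n → ℂ | ∃ k l : ℕ,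
        (A₁ ^ k * A₂ ^ l).mulVec w = v} := by
  have ha0 : 0 < a := lt_trans one_pos ha
  subst hA₁ hA₂
  rw [show ((a : ℂ) * Complex.exp (θ * Complex.I)) = AA a θ from rfl]
  set i0 : Fin n := ⟨0, by omega⟩ with hi0
  set iN : Fin n := ⟨n - 1, by omega⟩ with hiN
  have hne : iN ≠ i0 := by
    simp only [hi0, hiN, ne_eq, Fin.mk.injEq]
    omega
  refine ⟨?_, ?_, ?_⟩
  · ext z
    simp only [Set.mem_setOf_eq]
    constructor
    · intro hJ j hj
      by_contra hzj
      have h0 : (0 : Fin n → ℂ) ∈ JSetPair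
          ((AA a θ) • (1 : Matrix (Fin n) (Fin n) ℂ) + Matrix.single i0 iN (1:ℂ))
          ((-1 : ℂ) • 1 + Matrix.single i0 iN (1:ℂ)) z := by
        rw [hJ]; trivial
      obtain ⟨u, k, l, hu, hkl, him⟩ := h0
      have himj := tendsto_pi_nhds.1 him j
      have huj := tendsto_pi_nhds.1 hu j
      have h2 : Tendsto (fun m => Cc (AA a θ) (k m) (l m) * u m j) atTop (𝓝 0) := by
        have h3 : Tendsto (fun m => (((AA a θ) • (1 : Matrix (Fin n) (Fin n) ℂ) +
            Matrix.single i0 iN (1:ℂ))^(k m) *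
            ((-1 : ℂ) • 1 + Matrix.single i0 iN (1:ℂ))^(l m)).mulVec (u m) j) atTop
            (𝓝 (0 : ℂ)) := by simpa using himj
        refine Tendsto.congr (fun m => ?_) h3
        rw [mulVec_prod i0 iN hne]
        simp only [if_neg hj, add_zero]
      have h3 : Tendsto (fun m => ‖u m j‖) atTop (𝓝 ‖z j‖) := huj.norm
      have h4 : Tendsto (fun m => ‖Cc (AA a θ) (k m) (l m) * u m j‖) atTop (𝓝 0) := by
        simpa using h2.norm
      have h5 : ‖z j‖ ≤ 0 := by
        refine le_of_tendsto_of_tendsto' h3 h4 (fun m => ?_)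
        rw [norm_mul, Complex.norm_eq_abs (Cc (AA a θ) (k m) (l m)), abs_Cc ha0]
        nlinarith [norm_nonneg (u m j), show (1:ℝ) ≤ a^(k m) from one_le_pow₀ ha.le]
      exact hzj (norm_le_zero_iff.1 h5)
    · intro hzz
      apply Set.eq_univ_of_forall
      intro w
      exact memJ i0 iN hne ha hθ z w hzz
  · refine ⟨fun j => if j = i0 then 1 else 0, ?_, ?_⟩
    · intro h
      have := congrFun h i0
      simp at this
    · apply Set.eq_univ_of_forall
      intro w
      apply memJ i0 iN hne ha hθ _ w
      intro j hj
      simp [if_neg hj]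
  · rintro ⟨w, hw⟩
    by_cases hwN : w iN = 0
    · have hU : IsOpen ((fun v : Fin n → ℂ => v iN) ⁻¹' Metric.ball (1:ℂ) (1/2)) :=
        (continuous_apply iN).isOpen_preimage _ Metric.isOpen_ball
      have hUne : ((fun v : Fin n → ℂ => v iN) ⁻¹' Metric.ball (1:ℂ) (1/2)).Nonempty :=
        ⟨fun _ => 1, by simp [Metric.mem_ball]⟩
      obtain ⟨v, hvS, hvU⟩ := hw.exists_mem_open hU hUne
      obtain ⟨k, l, hkl⟩ := hvS
      have hval : v iN = 0 := by
        rw [← hkl, mulVec_prod i0 iN hne]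
        simp only [if_neg hne, add_zero, hwN, mul_zero]
      rw [Set.mem_preimage, hval, Metric.mem_ball] at hvU
      have : dist (0:ℂ) 1 = 1 := by simp
      rw [this] at hvU
      norm_num at hvU
    · have hU : IsOpen ((fun v : Fin n → ℂ => v iN) ⁻¹'
          Metric.ball (w iN / 2) (Complex.abs (w iN) / 4)) :=
        (continuous_apply iN).isOpen_preimage _ Metric.isOpen_ball
      have habs : 0 < Complex.abs (w iN) := AbsoluteValue.pos _ hwN
      have hUne : ((fun v : Fin n → ℂ => v iN) ⁻¹'
          Metric.ball (w iN / 2) (Complex.abs (w iN) / 4)).Nonempty :=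
        ⟨fun _ => w iN / 2, by
          simp only [Set.mem_preimage, Metric.mem_ball, dist_self]
          positivity⟩
      obtain ⟨v, hvS, hvU⟩ := hw.exists_mem_open hU hUne
      obtain ⟨k, l, hkl⟩ := hvS
      have hval : v iN = Cc (AA a θ) k l * w iN := by
        rw [← hkl, mulVec_prod i0 iN hne]
        simp only [if_neg hne, add_zero]
      rw [Set.mem_preimage, hval, Metric.mem_ball, Complex.dist_eq, Complex.norm_eq_abs] at hvU
      have h1 : Complex.abs (Cc (AA a θ) k l * w iN) - Complex.abs (w iN / 2)
          ≤ Complex.abs (Cc (AA a θ) k l * w iN - w iN / 2) := by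
        have := norm_sub_norm_le (Cc (AA a θ) k l * w iN) (w iN / 2)
        simpa [Complex.norm_eq_abs] using this
      rw [_root_.map_mul, abs_Cc ha0, map_div₀] at h1
      have h2 : Complex.abs ((2:ℂ)) = 2 := by norm_num
      rw [h2] at h1
      have h3 : (1:ℝ) ≤ a ^ k := one_le_pow₀ ha.le
      nlinarith [hvU, h1, habs]
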